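/- arXiv:2102.02031 — 2 statements merged into one kernel-verified Lean document; each statement's English description precedes it below -/
import Mathlib

section
/- Let I₁, …, I_N be pairwise disjoint measurable subsets of [0, ∞), each with finite Lebesgue measure, and let 0 ≤ ε_k ≤ 1 for 1 ≤ k ≤ N. Then for every natural number p, ∑_{k=1}^N ε_k ∫_{I_k} (t^p / p!) e^{−t} dt ≤ 1 − exp(−∑_{k=1}^N ε_k |I_k|). -/
/-!
Put `g = ∑ ε_k 𝟙_{I_k}`, so that `0 ≤ g ≤ 1` by disjointness, and `m = ∫ g = ∑ ε_k |I_k|`.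
With `f t = t^p e^{-t} / p!`, a probability density on `[0, ∞)`, the claim reads
`∫_{[0,∞)} (1 - g) f ≥ e^{-m}`. Consider the time change `φ t = ∫_0^t (1 - g)`: it is
1-Lipschitz with `φ' = 1 - g` a.e., and `0 ≤ φ t ≤ t ≤ φ t + m` for `t ≥ 0`, whence
`e^{-m} f (φ t) ≤ f t`. Multiplying by `1 - g` and substituting `s = φ t` gives
`e^{-m} ∫_0^{φ T} f ≤ ∫_0^T (1 - g) f`; as `φ T → ∞`, the left side tends to `e^{-m}`.
-/

open MeasureTheory Set Filter Topology Function intervalIntegral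
open scoped NNReal

noncomputable def erlangDensity (p : ℕ) (t : ℝ) : ℝ := t ^ p / p.factorial * Real.exp (-t)

lemma continuous_erlangDensity (p : ℕ) : Continuous (erlangDensity p) := by
  unfold erlangDensity; fun_prop

lemma erlangDensity_nonneg (p : ℕ) {t : ℝ} (ht : 0 ≤ t) : 0 ≤ erlangDensity p t := by
  unfold erlangDensity; positivity

lemma erlangDensity_eq_gamma_integrand (p : ℕ) :
    erlangDensity p = fun t => Real.exp (-t) * t ^ ((p : ℝ) + 1 - 1) / p.factorial := by
  ext t; rw [erlangDensity, add_sub_cancel_right, Real.rpow_natCast]; ring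

lemma integrableOn_erlangDensity_Ici (p : ℕ) : IntegrableOn (erlangDensity p) (Ici 0) := by
  refine IntegrableOn.congr_set_ae ?_ (Ioi_ae_eq_Ici (a := (0 : ℝ)) (μ := volume)).symm
  rw [erlangDensity_eq_gamma_integrand]
  exact (Real.GammaIntegral_convergent (s := p + 1) (by positivity)).div_const _

lemma integral_erlangDensity_Ici (p : ℕ) : ∫ t in Ici 0, erlangDensity p t = 1 := by
  rw [integral_Ici_eq_integral_Ioi, erlangDensity_eq_gamma_integrand,
    MeasureTheory.integral_div, ← Real.Gamma_eq_integral (by positivity),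
    Real.Gamma_nat_eq_factorial, div_self (by positivity)]

lemma tendsto_integral_erlangDensity (p : ℕ) :
    Tendsto (fun b => ∫ t in 0..b, erlangDensity p t) atTop (𝓝 1) := by
  rw [← integral_erlangDensity_Ici p, integral_Ici_eq_integral_Ioi]
  exact intervalIntegral_tendsto_integral_Ioi 0
    ((integrableOn_erlangDensity_Ici p).mono_set Ioi_subset_Ici_self) tendsto_id

lemma exp_neg_mul_erlangDensity_le (p : ℕ) {s t m : ℝ} (hs : 0 ≤ s) (hst : s ≤ t)
    (htsm : t - s ≤ m) : Real.exp (-m) * erlangDensity p s ≤ erlangDensity p t := by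
  have hexp : Real.exp (-m) * Real.exp (-s) ≤ Real.exp (-t) := by
    rw [← Real.exp_add]; exact Real.exp_le_exp.2 (by linarith)
  have ht : 0 ≤ t := hs.trans hst
  calc Real.exp (-m) * erlangDensity p s
      = s ^ p / p.factorial * (Real.exp (-m) * Real.exp (-s)) := by rw [erlangDensity]; ring
    _ ≤ t ^ p / p.factorial * Real.exp (-t) :=
        mul_le_mul (by gcongr) hexp (by positivity) (by positivity)

theorem integral_comp_mul_deriv_of_lipschitzOnWith {φ φ' f : ℝ → ℝ} {a b : ℝ} {K : ℝ≥0}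
    (hφ : LipschitzOnWith K φ (uIcc a b))
    (hφ' : ∀ᵐ t, t ∈ uIcc a b → HasDerivAt φ (φ' t) t) (hf : Continuous f) :
    ∫ t in a..b, f (φ t) * φ' t = ∫ s in φ a..φ b, f s := by
  set F : ℝ → ℝ := fun s => ∫ u in φ a..s, f u
  have hF : ∀ s, HasDerivAt F (f s) s := fun s => (hf.integral_hasStrictDerivAt _ s).hasDerivAt
  have hF_contDiff : ContDiff ℝ 1 F := contDiff_one_iff_deriv.2
    ⟨fun s => (hF s).differentiableAt, (funext fun s => (hF s).deriv) ▸ hf⟩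
  obtain ⟨L, hFL⟩ := hF_contDiff.locallyLipschitz.locallyLipschitzOn
    |>.exists_lipschitzOnWith_of_compact (isCompact_uIcc.image_of_continuousOn hφ.continuousOn)
  -- `F ∘ φ` is Lipschitz, hence absolutely continuous, so the FTC applies although `φ` is
  -- differentiable only almost everywhere.
  have hFφ := (hFL.comp hφ (mapsTo_image φ _)).absolutelyContinuousOnInterval
    |>.integral_deriv_eq_sub
  simp only [comp_apply, F, integral_same, sub_zero] at hFφ
  rw [← hFφ]
  refine integral_congr_ae ?_
  filter_upwards [hφ'] with t ht htab
  exact (((hF (φ t)).comp t (ht (uIoc_subset_uIcc htab))).deriv).symm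

lemma lipschitzWith_integral_of_norm_le {h : ℝ → ℝ} {C : ℝ≥0}
    (hh : ∀ a b, IntervalIntegrable h volume a b) (hC : ∀ t, ‖h t‖ ≤ C) (c : ℝ) :
    LipschitzWith C fun t => ∫ s in c..t, h s := by
  refine LipschitzWith.of_dist_le_mul fun x y => ?_
  rw [Real.dist_eq, Real.dist_eq, integral_interval_sub_left (hh c x) (hh c y)]
  exact norm_integral_le_of_norm_le_const fun t _ => hC t

section TimeChange

variable {g : ℝ → ℝ}

lemma integral_one_sub_mem_Icc (hg0 : ∀ t, 0 ≤ g t) (hg1 : ∀ t, g t ≤ 1) (hg : Integrable g)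
    {T : ℝ} (hT : 0 ≤ T) : ∫ s in 0..T, (1 - g s) ∈ Icc 0 T := by
  rw [integral_sub intervalIntegrable_const hg.intervalIntegrable,
    intervalIntegral.integral_const, smul_eq_mul, mul_one, sub_zero]
  have h0 : 0 ≤ ∫ s in 0..T, g s := integral_nonneg hT fun t _ => hg0 t
  have hT' : ∫ s in 0..T, g s ≤ T := by
    simpa using integral_mono_on hT hg.intervalIntegrable intervalIntegrable_const
      fun t _ => hg1 t
  constructor <;> linarith

lemma sub_integral_one_sub_le (hg0 : ∀ t, 0 ≤ g t) (hg : Integrable g) {T : ℝ} (hT : 0 ≤ T) :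
    T - ∫ s in 0..T, (1 - g s) ≤ ∫ t, g t := by
  rw [integral_sub intervalIntegrable_const hg.intervalIntegrable,
    intervalIntegral.integral_const, smul_eq_mul, mul_one, sub_zero, sub_sub_cancel,
    integral_of_le hT]
  exact setIntegral_le_integral hg (ae_of_all _ hg0)

lemma exp_neg_mul_integral_erlangDensity_le (p : ℕ) (hg0 : ∀ t, 0 ≤ g t) (hg1 : ∀ t, g t ≤ 1)
    (hg : Integrable g) {T : ℝ} (hT : 0 ≤ T) :
    Real.exp (-∫ t, g t) * ∫ s in 0..(∫ u in 0..T, (1 - g u)), erlangDensity p s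
      ≤ ∫ t in 0..T, (1 - g t) * erlangDensity p t := by
  set φ : ℝ → ℝ := fun t => ∫ u in 0..t, (1 - g u)
  have h1g : ∀ a b, IntervalIntegrable (fun t => 1 - g t) volume a b :=
    fun _ _ => intervalIntegrable_const.sub hg.intervalIntegrable
  have hφ_lip : LipschitzWith 1 φ := lipschitzWith_integral_of_norm_le h1g (fun t => by
    rw [NNReal.coe_one]; exact abs_le.2 ⟨by linarith [hg1 t], by linarith [hg0 t]⟩) 0
  have hφ_deriv : ∀ᵐ t, t ∈ uIcc 0 T → HasDerivAt φ (1 - g t) t :=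
    (LocallyIntegrable.ae_hasDerivAt_integral (f := fun t => 1 - g t)
      ((locallyIntegrable_const 1).sub hg.locallyIntegrable)).mono fun t ht _ => ht 0
  have hfφ : Continuous fun t => erlangDensity p (φ t) :=
    (continuous_erlangDensity p).comp hφ_lip.continuous
  calc Real.exp (-∫ t, g t) * ∫ s in 0..φ T, erlangDensity p s
      = Real.exp (-∫ t, g t) * ∫ t in 0..T, erlangDensity p (φ t) * (1 - g t) := by
        rw [integral_comp_mul_deriv_of_lipschitzOnWith hφ_lip.lipschitzOnWith hφ_deriv
          (continuous_erlangDensity p), show φ 0 = 0 from integral_same]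
    _ = ∫ t in 0..T, Real.exp (-∫ t, g t) * (erlangDensity p (φ t) * (1 - g t)) :=
        (intervalIntegral.integral_const_mul _ _).symm
    _ ≤ ∫ t in 0..T, (1 - g t) * erlangDensity p t := by
        refine integral_mono_on hT (((h1g 0 T).continuousOn_mul hfφ.continuousOn).const_mul _)
          ((h1g 0 T).mul_continuousOn (continuous_erlangDensity p).continuousOn)
          fun t ht => ?_
        have hφt := integral_one_sub_mem_Icc hg0 hg1 hg ht.1
        rw [← mul_assoc, mul_comm (1 - g t)]
        exact mul_le_mul_of_nonneg_right (exp_neg_mul_erlangDensity_le p hφt.1 hφt.2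
          (sub_integral_one_sub_le hg0 hg ht.1)) (by linarith [hg1 t])

theorem setIntegral_mul_erlangDensity_le (p : ℕ) (hg0 : ∀ t, 0 ≤ g t) (hg1 : ∀ t, g t ≤ 1)
    (hg : Integrable g) :
    ∫ t in Ici 0, g t * erlangDensity p t ≤ 1 - Real.exp (-∫ t, g t) := by
  have hf_int := integrableOn_erlangDensity_Ici p
  have hgf_int : IntegrableOn (fun t => g t * erlangDensity p t) (Ici 0) :=
    hf_int.bdd_mul hg.aestronglyMeasurable.restrict
      (ae_of_all _ fun t => abs_le.2 ⟨by linarith [hg0 t], hg1 t⟩)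
  have hsplit : ∫ t in Ici 0, (1 - g t) * erlangDensity p t
      = 1 - ∫ t in Ici 0, g t * erlangDensity p t := by
    simp only [sub_mul, one_mul]
    rw [integral_sub hf_int hgf_int, integral_erlangDensity_Ici]
  have hupper : ∀ T, 0 ≤ T → ∫ t in 0..T, (1 - g t) * erlangDensity p t
      ≤ ∫ t in Ici 0, (1 - g t) * erlangDensity p t := fun T hT => by
    rw [integral_of_le hT]
    refine setIntegral_mono_set ((hf_int.sub hgf_int).congr_fun
        (fun t _ => by simp only [Pi.sub_apply]; ring) measurableSet_Ici)
      ((ae_restrict_iff' measurableSet_Ici).2 (ae_of_all _ fun t ht => ?_))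
      (Ioc_subset_Ioi_self.trans Ioi_subset_Ici_self).eventuallyLE
    exact mul_nonneg (by linarith [hg1 t]) (erlangDensity_nonneg p ht)
  have htime_top : Tendsto (fun T => ∫ u in 0..T, (1 - g u)) atTop atTop :=
    tendsto_atTop_mono' _ ((eventually_ge_atTop 0).mono fun T hT => by
        dsimp only [id]; linarith [sub_integral_one_sub_le hg0 hg hT])
      (tendsto_atTop_add_const_right _ (-∫ t, g t) tendsto_id)
  have hlim := ((tendsto_integral_erlangDensity p).comp htime_top).const_mul
    (Real.exp (-∫ t, g t))
  rw [mul_one] at hlim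
  have := le_of_tendsto hlim (eventually_atTop.2 ⟨0, fun T hT =>
    (exp_neg_mul_integral_erlangDensity_le p hg0 hg1 hg hT).trans (hupper T hT)⟩)
  linarith

end TimeChange

section IndicatorSums

variable {α ι : Type*} {I : ι → Set α}

lemma sum_indicator_const_le [Fintype ι] (hI : Pairwise (Disjoint on I)) {ε : ι → ℝ} {c : ℝ}
    (hc : 0 ≤ c) (hε : ∀ k, ε k ≤ c) (t : α) : ∑ k, (I k).indicator (fun _ => ε k) t ≤ c := by
  by_cases ht : ∃ j, t ∈ I j
  · obtain ⟨j, hj⟩ := ht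
    rw [Finset.sum_eq_single j (fun k _ hkj => indicator_of_notMem
        (disjoint_left.1 (hI hkj.symm) hj) _) (fun h => absurd (Finset.mem_univ j) h),
      indicator_of_mem hj]
    exact hε j
  · push Not at ht
    simpa only [indicator_of_notMem (ht _), Finset.sum_const_zero] using hc

variable [MeasurableSpace α] {μ : Measure α}

lemma integrable_indicator_const {s : Set α} (hs : MeasurableSet s) (hμs : μ s ≠ ⊤) (c : ℝ) :
    Integrable (s.indicator fun _ => c) μ :=
  (integrable_indicator_iff hs).2 (integrableOn_const hμs)

variable [Fintype ι]

lemma integral_sum_indicator_const (hI : ∀ k, MeasurableSet (I k)) (hfin : ∀ k, μ (I k) ≠ ⊤)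
    (ε : ι → ℝ) : ∫ t, ∑ k, (I k).indicator (fun _ => ε k) t ∂μ = ∑ k, ε k * μ.real (I k) := by
  rw [integral_finsetSum _ fun k _ => integrable_indicator_const (hI k) (hfin k) (ε k)]
  simp only [integral_indicator_const _ (hI _), smul_eq_mul, mul_comm]

lemma setIntegral_sum_indicator_const_mul {S : Set α} {f : α → ℝ}
    (hI : ∀ k, MeasurableSet (I k)) (hIS : ∀ k, I k ⊆ S) (hf : IntegrableOn f S μ)
    (ε : ι → ℝ) :
    ∫ t in S, (∑ k, (I k).indicator (fun _ => ε k) t) * f t ∂μ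
      = ∑ k, ε k * ∫ t in I k, f t ∂μ := by
  simp only [Finset.sum_mul, ← indicator_mul_left]
  rw [integral_finsetSum _ fun k _ => ((integrable_indicator_iff (hI k)).2
    ((hf.mono_set (hIS k)).const_mul (ε k))).restrict]
  refine Finset.sum_congr rfl fun k _ => ?_
  rw [MeasureTheory.integral_indicator (hI k), Measure.restrict_restrict (hI k),
    inter_eq_left.2 (hIS k), MeasureTheory.integral_const_mul]

end IndicatorSums

/-- For pairwise disjoint measurable sets `I₁, …, I_N ⊆ [0, ∞)` of finite Lebesgue measure
and weights `0 ≤ ε_k ≤ 1`, for every `p ∈ ℕ`,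
`∑_k ε_k ∫_{I_k} (t^p/p!) e^{−t} dt ≤ 1 − exp(−∑_k ε_k |I_k|)`. -/
theorem sum_weighted_integral_le
    (N : ℕ) (I : Fin N → Set ℝ)
    (hmeas : ∀ k, MeasurableSet (I k)) (hsub : ∀ k, I k ⊆ Set.Ici 0)
    (hfin : ∀ k, volume (I k) ≠ ⊤)
    (hdisj : Pairwise (Function.onFun Disjoint I))
    (ε : Fin N → ℝ) (hε0 : ∀ k, 0 ≤ ε k) (hε1 : ∀ k, ε k ≤ 1) (p : ℕ) :
    ∑ k, ε k * ∫ t in I k, t ^ p / (p.factorial : ℝ) * Real.exp (-t)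
      ≤ 1 - Real.exp (-∑ k, ε k * (volume (I k)).toReal) := by
  have key := setIntegral_mul_erlangDensity_le p
    (fun t => Finset.sum_nonneg fun k _ => indicator_nonneg (fun _ _ => hε0 k) t)
    (sum_indicator_const_le hdisj zero_le_one hε1)
    (integrable_finsetSum _ fun k _ => integrable_indicator_const (hmeas k) (hfin k) (ε k))
  rwa [setIntegral_sum_indicator_const_mul hmeas hsub (integrableOn_erlangDensity_Ici p),
    integral_sum_indicator_const hmeas hfin] at key
end

section
/- Let w ∈ ℂ and let Ω ⊆ ℂ be a measurable set with finite Lebesgue measure |Ω|. Then ∫_Ω e^{−π|z−w|²} dA(z) ≤ 1 − e^{−|Ω|}. (Equivalently, ∫_Ω |k_w(z)|² dλ(z) ≤ 1 − e^{−|Ω|}, where k_w(z) = e^{π w̄ z − (π/2)|w|²} is the normalized reproducing kernel of the Bargmann–Fock space.) -/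
/-!
The Gaussian `f z = exp (-π ‖z - w‖²)` decreases with `‖z - w‖`, so by the bathtub principle its
integral over a set `Ω` of finite measure is at most its integral over the disc `B` centred at `w`
with the same area: `Ω \ B` and `B \ Ω` have equal measure, and `f` is below its value on `∂B`
on the first and above it on the second. In polar coordinates the integral over a disc of radius
`r` is `1 - exp (-π r²)`, and `π r² = |Ω|`.
-/

open MeasureTheory Set Real Metric

theorem setIntegral_le_setIntegral_of_measure_eq {α : Type*} [MeasurableSpace α]
    {μ : Measure α} {f : α → ℝ} {s t : Set α} {c : ℝ} (ht : MeasurableSet t)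
    (hμ : μ s = μ t) (hfin : μ s ≠ ⊤) (hfs : IntegrableOn f s μ) (hft : IntegrableOn f t μ)
    (h_le : ∀ x ∉ t, f x ≤ c) (h_ge : ∀ x ∈ t, c ≤ f x) :
    ∫ x in s, f x ∂μ ≤ ∫ x in t, f x ∂μ := by
  wlog hs : MeasurableSet s generalizing s
  · have h_restrict := Measure.restrict_toMeasurable hfin
    rw [← h_restrict]
    refine this (by rwa [measure_toMeasurable]) (by rwa [measure_toMeasurable])
      (by rwa [IntegrableOn, h_restrict]) (measurableSet_toMeasurable μ s)
  have hdiff : μ (s \ t) = μ (t \ s) := by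
    have hst := measure_sdiff_add_inter (μ := μ) s ht
    have hts := measure_sdiff_add_inter (μ := μ) t hs
    rw [inter_comm, ← hμ, ← hst] at hts
    exact (ENNReal.add_left_inj (measure_ne_top_of_subset inter_subset_left hfin)).mp hts.symm
  have h_out : ∫ x in s \ t, f x ∂μ ≤ ∫ x in s \ t, c ∂μ :=
    setIntegral_mono_on (hfs.mono_set sdiff_subset)
      (integrableOn_const (measure_ne_top_of_subset sdiff_subset hfin)) (hs.diff ht)
      fun x hx => h_le x hx.2
  have h_in : c * μ.real (t \ s) ≤ ∫ x in t \ s, f x ∂μ :=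
    setIntegral_ge_of_const_le_real (ht.diff hs)
      (hdiff ▸ measure_ne_top_of_subset sdiff_subset hfin) (fun x hx => h_ge x hx.1)
      (hft.mono_set sdiff_subset)
  rw [setIntegral_const, measureReal_def, hdiff, ← measureReal_def, smul_eq_mul] at h_out
  rw [← integral_inter_add_sdiff ht hfs, ← integral_inter_add_sdiff hs hft, inter_comm]
  linarith

theorem integral_Ioo_mul_exp_neg_mul_sq {b : ℝ} (hb : b ≠ 0) {r : ℝ} (hr : 0 ≤ r) :
    ∫ y in Ioo 0 r, y * exp (-b * y ^ 2) = (1 - exp (-b * r ^ 2)) / (2 * b) := by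
  have hderiv : ∀ y ∈ uIcc 0 r, HasDerivAt (fun y => exp (-b * y ^ 2) / -(2 * b))
      (y * exp (-b * y ^ 2)) y := by
    intro y _
    refine (((hasDerivAt_pow 2 y).const_mul (-b)).exp.div_const (-(2 * b))).congr_deriv ?_
    field_simp
    ring
  rw [← integral_Ioc_eq_integral_Ioo, ← intervalIntegral.integral_of_le hr,
    intervalIntegral.integral_eq_sub_of_hasDerivAt hderiv
      ((by fun_prop : Continuous fun y => y * exp (-b * y ^ 2)).intervalIntegrable 0 r)]
  rw [zero_pow two_ne_zero, mul_zero, exp_zero]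
  field_simp
  ring

theorem Complex.integral_ball_exp_neg_mul_norm_sq {b : ℝ} (hb : b ≠ 0) {r : ℝ} (hr : 0 ≤ r) :
    ∫ z in ball (0 : ℂ) r, Real.exp (-b * ‖z‖ ^ 2) = π / b * (1 - Real.exp (-b * r ^ 2)) := by
  have hball : ball (0 : ℂ) r = norm ⁻¹' Iio r := by ext; simp
  rw [← integral_indicator measurableSet_ball, hball]
  simp_rw [← Function.comp_apply (f := fun y : ℝ => Real.exp (-b * y ^ 2)) (g := norm),
    indicator_comp_right]
  rw [integral_fun_norm_addHaar volume, Complex.finrank_real_complex, measureReal_def,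
    Complex.volume_ball]
  simp only [Nat.add_one_sub_one, pow_one, smul_eq_mul]
  simp_rw [← indicator_mul_right _ (fun y : ℝ => y)]
  rw [setIntegral_indicator measurableSet_Iio, Ioi_inter_Iio,
    integral_Ioo_mul_exp_neg_mul_sq hb hr]
  simp only [ENNReal.ofReal_one, one_pow, one_mul, ENNReal.coe_toReal, NNReal.coe_real_pi,
    nsmul_eq_mul, Nat.cast_ofNat]
  field_simp

theorem Complex.integral_ball_exp_neg_mul_norm_sub_sq (w : ℂ) {b : ℝ} (hb : b ≠ 0) {r : ℝ}
    (hr : 0 ≤ r) :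
    ∫ z in ball w r, Real.exp (-b * ‖z - w‖ ^ 2) = π / b * (1 - Real.exp (-b * r ^ 2)) := by
  have hball : (· - w) ⁻¹' ball (0 : ℂ) r = ball w r := by ext; simp [dist_eq_norm]
  rw [← hball, (measurePreserving_sub_right volume w).setIntegral_preimage_emb
    (MeasurableEquiv.subRight w).measurableEmbedding (fun z => Real.exp (-b * ‖z‖ ^ 2)),
    integral_ball_exp_neg_mul_norm_sq hb hr]

theorem Complex.volume_ball_sqrt_div_pi (w : ℂ) {s : ℝ} (hs : 0 ≤ s) :
    volume (ball w (√(s / π))) = ENNReal.ofReal s := by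
  rw [Complex.volume_ball, ← ENNReal.ofReal_pow (sqrt_nonneg _), sq_sqrt (by positivity),
    ← ENNReal.ofReal_coe_nnreal, NNReal.coe_real_pi, ← ENNReal.ofReal_mul (by positivity),
    div_mul_cancel₀ _ pi_ne_zero]

theorem reproducing_kernel_concentration_general
    (w : ℂ) (Ω : Set ℂ) (hfin : volume Ω ≠ ⊤) :
    ∫ z in Ω, Real.exp (-Real.pi * ‖z - w‖ ^ 2)
      ≤ 1 - Real.exp (-(volume Ω).toReal) := by
  set s := (volume Ω).toReal
  set r := √(s / π)
  have hr : π * r ^ 2 = s := by rw [sq_sqrt (by positivity), mul_div_cancel₀ _ pi_ne_zero]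
  have hvol : volume Ω = volume (ball w r) := by
    rw [Complex.volume_ball_sqrt_div_pi w ENNReal.toReal_nonneg, ENNReal.ofReal_toReal hfin]
  have hint : ∀ t : Set ℂ, volume t ≠ ⊤ →
      IntegrableOn (fun z => Real.exp (-π * ‖z - w‖ ^ 2)) t := fun t ht =>
    Measure.integrableOn_of_bounded ht (by fun_prop) (Filter.Eventually.of_forall fun z => by
      rw [norm_of_nonneg (exp_nonneg _), exp_le_one_iff]
      nlinarith [pi_pos, sq_nonneg ‖z - w‖])
  have h_far : ∀ z ∉ ball w r, Real.exp (-π * ‖z - w‖ ^ 2) ≤ Real.exp (-π * r ^ 2) := by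
    intro z hz
    rw [mem_ball, dist_eq_norm, not_lt] at hz
    simp only [neg_mul]
    gcongr
  have h_near : ∀ z ∈ ball w r, Real.exp (-π * r ^ 2) ≤ Real.exp (-π * ‖z - w‖ ^ 2) := by
    intro z hz
    rw [mem_ball, dist_eq_norm] at hz
    simp only [neg_mul]
    gcongr
  calc ∫ z in Ω, Real.exp (-π * ‖z - w‖ ^ 2)
      ≤ ∫ z in ball w r, Real.exp (-π * ‖z - w‖ ^ 2) :=
        setIntegral_le_setIntegral_of_measure_eq measurableSet_ball hvol hfin (hint Ω hfin)
          (hint _ (hvol ▸ hfin)) h_far h_near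
    _ = 1 - Real.exp (-s) := by
        rw [Complex.integral_ball_exp_neg_mul_norm_sub_sq w pi_ne_zero (sqrt_nonneg _),
          div_self pi_ne_zero, one_mul, neg_mul, hr]

/-- For the normalized reproducing kernel `k_w` of the Bargmann–Fock space and any
measurable `Ω ⊆ ℂ` of finite Lebesgue measure,
`∫_Ω |k_w(z)|² dλ(z) = ∫_Ω e^{−π|z−w|²} dA(z) ≤ 1 − e^{−|Ω|}`. -/
theorem reproducing_kernel_concentration
    (w : ℂ) (Ω : Set ℂ) (hmeas : MeasurableSet Ω) (hfin : volume Ω ≠ ⊤) :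
    ∫ z in Ω, Real.exp (-Real.pi * ‖z - w‖ ^ 2)
      ≤ 1 - Real.exp (-(volume Ω).toReal) :=
  reproducing_kernel_concentration_general w Ω hfin
end
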